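/- arXiv:2007.00377 — 2 statements merged into one kernel-verified Lean document; each statement's English description precedes it below -/
import Mathlib

section
/- If (R, m) is a Noetherian local ring and I, J are m-primary ideals with J an almost reduction of I, then the multiplicities e_0(J) and e_0(I) are equal. -/
/-- `J` is an *almost reduction* of `I`. -/
def IsAlmostReduction {R : Type*} [CommRing R] (J I : Ideal R) : Prop :=
  ∃ ℓ : ℕ, J ^ ℓ ≤ I ^ ℓ ∧ I ^ (ℓ + 1) = J * I ^ ℓ

/-- The length of a module, as a natural number (the Krull dimension of the lattice of
submodules; `0` if infinite). -/
noncomputable def lengthNat (R M : Type*) [CommRing R] [AddCommGroup M] [Module R M] : ℕ :=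
  ENat.toNat (WithBot.unbotD 0 (Order.krullDim (Submodule R M)))

/-- The Krull dimension of the ring `R`, as a natural number. -/
noncomputable def dimNat (R : Type*) [CommRing R] : ℕ :=
  ENat.toNat (WithBot.unbotD 0 (ringKrullDim R))

/-!
Since `Iˡ⁺¹ = J Iˡ`, we get `Iⁿ⁺ˡ = Jⁿ Iˡ ⊆ Jⁿ`, and `Jˡ ⊆ Iˡ` gives `Jⁿ ⊆ Iⁿ` for `n ≥ ℓ`.
Hence `len(R/Iⁿ) ≤ len(R/Jⁿ) ≤ len(R/Iⁿ⁺ˡ)` for `n ≥ ℓ` (all lengths are finite as `I`, `J`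
are `𝔪`-primary), and shifting the index by the constant `ℓ` does not change the limit
of `len(R/Iⁿ)/nᵈ`, because `(n + ℓ)ᵈ ~ nᵈ`.
-/

open Filter Topology Asymptotics

lemma pow_add_eq_pow_mul_of_pow_succ_eq {M : Type*} [CommMonoid M] {x y : M} {ℓ : ℕ}
    (h : x ^ (ℓ + 1) = y * x ^ ℓ) (n : ℕ) : x ^ (n + ℓ) = y ^ n * x ^ ℓ := by
  induction n with
  | zero => simp
  | succ n ih =>
    calc x ^ (n + 1 + ℓ) = x ^ (n + ℓ) * x := by rw [Nat.add_right_comm, pow_succ]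
      _ = y ^ n * x ^ (ℓ + 1) := by rw [ih, mul_assoc, ← pow_succ]
      _ = y ^ (n + 1) * x ^ ℓ := by rw [h, ← mul_assoc, ← pow_succ]

lemma IsAlmostReduction.exists_pow_le {R : Type*} [CommRing R] {J I : Ideal R}
    (h : IsAlmostReduction J I) :
    ∃ ℓ, (∀ n, I ^ (n + ℓ) ≤ J ^ n) ∧ ∀ n, ℓ ≤ n → J ^ n ≤ I ^ n := by
  obtain ⟨ℓ, hle, hstep⟩ := h
  have hpow := pow_add_eq_pow_mul_of_pow_succ_eq hstep
  refine ⟨ℓ, fun n => hpow n ▸ Ideal.mul_le_left, fun n hn => ?_⟩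
  obtain ⟨k, rfl⟩ := Nat.exists_eq_add_of_le' hn
  calc J ^ (k + ℓ) = J ^ k * J ^ ℓ := pow_add J k ℓ
    _ ≤ J ^ k * I ^ ℓ := Ideal.mul_mono_right hle
    _ = I ^ (k + ℓ) := (hpow k).symm

lemma lengthNat_eq_toNat_length (R M : Type*) [CommRing R] [AddCommGroup M] [Module R M] :
    lengthNat R M = (Module.length R M).toNat := by
  rw [lengthNat, ← Module.coe_length, WithBot.unbotD_coe]

lemma Ideal.length_quotient_le_of_le {R : Type*} [CommRing R] {I J : Ideal R} (h : I ≤ J) :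
    Module.length R (R ⧸ J) ≤ Module.length R (R ⧸ I) :=
  Module.length_le_of_surjective (Submodule.factor h) (Submodule.factor_surjective h)

lemma lengthNat_quotient_le_of_le {R : Type*} [CommRing R] {I J : Ideal R} (h : I ≤ J)
    (hI : Module.length R (R ⧸ I) ≠ ⊤) :
    lengthNat R (R ⧸ J) ≤ lengthNat R (R ⧸ I) := by
  rw [lengthNat_eq_toNat_length, lengthNat_eq_toNat_length]
  exact ENat.toNat_le_toNat (Ideal.length_quotient_le_of_le h) hI

lemma length_quotient_pow_ne_top {R : Type*} [CommRing R] [IsNoetherianRing R] [IsLocalRing R]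
    {I : Ideal R} (hI : I.radical = IsLocalRing.maximalIdeal R) (n : ℕ) :
    Module.length R (R ⧸ I ^ n) ≠ ⊤ := by
  rcases eq_or_ne n 0 with rfl | hn
  · simp [Module.length_eq_zero]
  have : IsArtinianRing (R ⧸ I ^ n) := by
    apply IsLocalRing.quotient_artinian_of_mem_minimalPrimes_of_isLocalRing
    rw [← Ideal.radical_minimalPrimes, Ideal.radical_pow I hn, hI,
      Ideal.minimalPrimes_eq_subsingleton_self]
    rfl
  rw [Module.length_eq_of_surjective (R := R ⧸ I ^ n) Ideal.Quotient.mk_surjective]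
  exact Module.length_ne_top

lemma isEquivalent_natCast_add (k : ℕ) :
    (fun n : ℕ => ((n + k : ℕ) : ℝ)) ~[atTop] fun n => (n : ℝ) := by
  push_cast
  exact IsEquivalent.refl.add_isLittleO (isLittleO_const_id_atTop (k : ℝ)).natCast_atTop

lemma tendsto_div_pow_add_iff (u : ℕ → ℝ) (k d : ℕ) (L : ℝ) :
    Tendsto (fun n => u (n + k) / (n : ℝ) ^ d) atTop (𝓝 L) ↔
      Tendsto (fun n => u n / (n : ℝ) ^ d) atTop (𝓝 L) := by
  rw [← tendsto_add_atTop_iff_nat k (f := fun n => u n / (n : ℝ) ^ d)]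
  refine IsEquivalent.tendsto_nhds_iff ?_
  simp only [div_eq_mul_inv]
  exact IsEquivalent.refl.mul ((isEquivalent_natCast_add k).symm.pow d).inv

lemma tendsto_div_pow_of_le_of_le_add {u v : ℕ → ℝ} {k d : ℕ} {L : ℝ}
    (hu : Tendsto (fun n => u n / (n : ℝ) ^ d) atTop (𝓝 L))
    (hlow : ∀ᶠ n in atTop, u n ≤ v n) (hupp : ∀ᶠ n in atTop, v n ≤ u (n + k)) :
    Tendsto (fun n => v n / (n : ℝ) ^ d) atTop (𝓝 L) :=
  tendsto_of_tendsto_of_tendsto_of_le_of_le' hu ((tendsto_div_pow_add_iff u k d L).2 hu)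
    (hlow.mono fun _ h => by gcongr) (hupp.mono fun _ h => by gcongr)

open Filter in
/-- If `(R, 𝔪)` is a Noetherian local ring and `I`, `J` are `𝔪`-primary ideals with `J`
an almost reduction of `I`, then the Hilbert–Samuel multiplicities `e₀(J)` and `e₀(I)` agree:
here `e₀(I) = d! · lim_n ℓ_R(R/Iⁿ)/n^d`, so we express the equality of multiplicities by
saying that the normalized length functions of `I` and `J` have the same limits. -/
theorem multiplicity_eq_of_isAlmostReduction {R : Type*} [CommRing R] [IsNoetherianRing R]
    [IsLocalRing R] (I J : Ideal R)
    (hI : I.radical = IsLocalRing.maximalIdeal R)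
    (hJ : J.radical = IsLocalRing.maximalIdeal R)
    (h : IsAlmostReduction J I) :
    ∀ L : ℝ,
      Tendsto (fun n : ℕ => (lengthNat R (R ⧸ I ^ n) : ℝ) / (n : ℝ) ^ (dimNat R)) atTop (nhds L)
      ↔ Tendsto (fun n : ℕ => (lengthNat R (R ⧸ J ^ n) : ℝ) / (n : ℝ) ^ (dimNat R))
          atTop (nhds L) := by
  obtain ⟨ℓ, hIJ, hJI⟩ := h.exists_pow_le
  have hJ_le_I (n : ℕ) : (lengthNat R (R ⧸ J ^ n) : ℝ) ≤ lengthNat R (R ⧸ I ^ (n + ℓ)) :=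
    mod_cast lengthNat_quotient_le_of_le (hIJ n) (length_quotient_pow_ne_top hI _)
  have hI_le_J (n : ℕ) (hn : ℓ ≤ n) :
      (lengthNat R (R ⧸ I ^ n) : ℝ) ≤ lengthNat R (R ⧸ J ^ n) :=
    mod_cast lengthNat_quotient_le_of_le (hJI n hn) (length_quotient_pow_ne_top hJ _)
  intro L
  constructor
  · intro hIL
    exact tendsto_div_pow_of_le_of_le_add hIL (eventually_atTop.2 ⟨ℓ, hI_le_J⟩)
      (.of_forall hJ_le_I)
  · intro hJL
    rw [← tendsto_div_pow_add_iff _ ℓ]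
    exact tendsto_div_pow_of_le_of_le_add hJL (.of_forall hJ_le_I)
      (.of_forall fun n => hI_le_J (n + ℓ) (Nat.le_add_left ℓ n))
end

section
/- Let R = k[[X,Y,Z]]/(XY, YZ, ZX) with k = Z/2Z, and let x, y, z be the images of X, Y, Z. Set I = (x+y, y+z) and f = x+y+z. Then (f) is an almost reduction of I (indeed f·I² = I³ and f² ∈ I²), but I admits no principal ideal reduction, i.e., there is no a ∈ R with a·I^n = I^{n+1} for some n. -/
noncomputable section

/-- The formal power series ring `k[[X,Y,Z]]` over `k = ℤ/2ℤ`. -/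
abbrev S : Type := MvPowerSeries (Fin 3) (ZMod 2)

/-- The ideal `(XY, YZ, ZX)` of `k[[X,Y,Z]]`. -/
def 𝔞 : Ideal S :=
  Ideal.span {MvPowerSeries.X 0 * MvPowerSeries.X 1, MvPowerSeries.X 1 * MvPowerSeries.X 2,
    MvPowerSeries.X 2 * MvPowerSeries.X 0}

/-- `R = k[[X,Y,Z]]/(XY, YZ, ZX)`. -/
abbrev R : Type := S ⧸ 𝔞

/-- The image `x` of `X` in `R`. -/
def x : R := Ideal.Quotient.mk 𝔞 (MvPowerSeries.X 0)
/-- The image `y` of `Y` in `R`. -/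
def y : R := Ideal.Quotient.mk 𝔞 (MvPowerSeries.X 1)
/-- The image `z` of `Z` in `R`. -/
def z : R := Ideal.Quotient.mk 𝔞 (MvPowerSeries.X 2)

/-!
In `R` the products `xy`, `yz`, `zx` vanish, so with `u = x + y` and `v = y + z` one computes
`u² = x² + y²`, `uv = y²`, `v² = y² + z²`, hence `I² = (x², y², z²)` and `I³ = (x³, y³, z³)`;
as `f·w² = w³` for `w = x, y, z`, this gives `f·I² = I³`, and `f² = x² + y² + z² ∈ I²`.

For the negative part, restrict to the three branches of `R`: the map `R → k[[t]]` sending one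
of `x, y, z` to `t` and the other two to `0` sends `I` onto `(t)`, so `I^(n+1) = a·I^n` forces
the image of `a = αu + βv` to be `t` times a unit. On the three branches this image is `αt`,
`(α + β)t` and `βt`, so `α`, `α + β` and `β` all have nonzero residue in `k = 𝔽₂`, which is
impossible.
-/

open Ideal

section OrthogonalTriple

variable {A : Type*} [CommRing A] {a b c : A}

theorem Ideal.span_mul_span_le_iff {S T : Set A} {J : Ideal A} :
    span S * span T ≤ J ↔ ∀ s ∈ S, ∀ t ∈ T, s * t ∈ J := by
  rw [span_mul_span', span_le, Set.mul_subset_iff]; rfl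

variable (hab : a * b = 0) (hbc : b * c = 0) (hca : c * a = 0)
include hab hbc hca

theorem span_pair_add_sq :
    span {a + b, b + c} ^ 2 = span {a ^ 2, b ^ 2, c ^ 2} := by
  set J := span {a ^ 2, b ^ 2, c ^ 2}
  have ha : a ^ 2 ∈ J := subset_span (by simp)
  have hb : b ^ 2 ∈ J := subset_span (by simp)
  have hc : c ^ 2 ∈ J := subset_span (by simp)
  have huu : (a + b) * (a + b) = a ^ 2 + b ^ 2 := by linear_combination 2 * hab
  have huv : (a + b) * (b + c) = b ^ 2 := by linear_combination hab + hbc + hca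
  have hvu : (b + c) * (a + b) = b ^ 2 := by linear_combination hab + hbc + hca
  have hvv : (b + c) * (b + c) = b ^ 2 + c ^ 2 := by linear_combination 2 * hbc
  rw [sq (span _)]
  apply le_antisymm
  · simp only [span_mul_span_le_iff, Set.forall_mem_insert, Set.mem_singleton_iff, forall_eq,
      huu, huv, hvu, hvv]
    exact ⟨⟨add_mem ha hb, hb⟩, hb, add_mem hb hc⟩
  · have hu : a + b ∈ span {a + b, b + c} := subset_span (by simp)
    have hv : b + c ∈ span {a + b, b + c} := subset_span (by simp)
    simp only [J, span_le, Set.insert_subset_iff, Set.singleton_subset_iff, SetLike.mem_coe]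
    refine ⟨?_, huv ▸ mul_mem_mul hu hv, ?_⟩
    · rw [show a ^ 2 = (a + b) * (a + b) - (a + b) * (b + c) by rw [huu, huv]; ring]
      exact sub_mem (mul_mem_mul hu hu) (mul_mem_mul hu hv)
    · rw [show c ^ 2 = (b + c) * (b + c) - (a + b) * (b + c) by rw [hvv, huv]; ring]
      exact sub_mem (mul_mem_mul hv hv) (mul_mem_mul hu hv)

theorem span_pair_add_pow_three :
    span {a + b, b + c} ^ 3 = span {a ^ 3, b ^ 3, c ^ 3} := by
  set J := span {a ^ 3, b ^ 3, c ^ 3}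
  have ha : a ^ 3 ∈ J := subset_span (by simp)
  have hb : b ^ 3 ∈ J := subset_span (by simp)
  have hc : c ^ 3 ∈ J := subset_span (by simp)
  have hua : (a + b) * a ^ 2 = a ^ 3 := by linear_combination a * hab
  have hub : (a + b) * b ^ 2 = b ^ 3 := by linear_combination b * hab
  have huc : (a + b) * c ^ 2 = 0 := by linear_combination c * hca + c * hbc
  have hva : (b + c) * a ^ 2 = 0 := by linear_combination a * hab + a * hca
  have hvb : (b + c) * b ^ 2 = b ^ 3 := by linear_combination b * hbc
  have hvc : (b + c) * c ^ 2 = c ^ 3 := by linear_combination c * hbc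
  rw [pow_succ', span_pair_add_sq hab hbc hca]
  apply le_antisymm
  · simp only [span_mul_span_le_iff, Set.forall_mem_insert, Set.mem_singleton_iff, forall_eq,
      hua, hub, huc, hva, hvb, hvc]
    exact ⟨⟨ha, hb, zero_mem _⟩, zero_mem _, hb, hc⟩
  · have hu : a + b ∈ span {a + b, b + c} := subset_span (by simp)
    have hv : b + c ∈ span {a + b, b + c} := subset_span (by simp)
    simp only [J, span_le, Set.insert_subset_iff, Set.singleton_subset_iff, SetLike.mem_coe]
    exact ⟨hua ▸ mul_mem_mul hu (subset_span (by simp)),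
      hub ▸ mul_mem_mul hu (subset_span (by simp)), hvc ▸ mul_mem_mul hv (subset_span (by simp))⟩

theorem span_singleton_add_add_mul_span_sq :
    span {a + b + c} * span {a ^ 2, b ^ 2, c ^ 2} = span {a ^ 3, b ^ 3, c ^ 3} := by
  have hfa : (a + b + c) * a ^ 2 = a ^ 3 := by linear_combination a * hab + a * hca
  have hfb : (a + b + c) * b ^ 2 = b ^ 3 := by linear_combination b * hab + b * hbc
  have hfc : (a + b + c) * c ^ 2 = c ^ 3 := by linear_combination c * hca + c * hbc
  rw [span_mul_span', Set.singleton_mul]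
  simp [Set.image_insert_eq, hfa, hfb, hfc]

theorem add_add_sq_mem_span_sq :
    (a + b + c) ^ 2 ∈ span {a ^ 2, b ^ 2, c ^ 2} := by
  rw [show (a + b + c) ^ 2 = a ^ 2 + b ^ 2 + c ^ 2 by
    linear_combination 2 * hab + 2 * hbc + 2 * hca]
  exact add_mem (add_mem (subset_span (by simp)) (subset_span (by simp))) (subset_span (by simp))

end OrthogonalTriple

theorem isUnit_of_pow_succ_eq_span_mul {A B : Type*} [CommRing A] [CommRing B] [IsDomain B]
    (φ : A →+* B) {I : Ideal A} {a g : A} {t : B} {n : ℕ} (ht : t ≠ 0)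
    (hI : I.map φ = span {t}) (hn : I ^ (n + 1) = span {a} * I ^ n) (ha : φ a = φ g * t) :
    IsUnit (φ g) := by
  have h := congrArg (Ideal.map φ) hn
  rw [Ideal.map_pow, Ideal.map_mul, Ideal.map_pow, hI, map_span, Set.image_singleton,
    span_singleton_pow, span_singleton_pow, span_singleton_mul_span_singleton,
    span_singleton_eq_span_singleton, ha, mul_assoc, ← pow_succ'] at h
  replace h : Associated (1 * t ^ (n + 1)) (φ g * t ^ (n + 1)) := by rwa [one_mul]
  exact associated_one_iff_isUnit.mp (h.of_mul_right (by rfl) (pow_ne_zero _ ht)).symm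

namespace MvPowerSeries

variable {σ k : Type*} [CommRing k]

theorem constantCoeff_subst_of_constantCoeff_zero {τ : Type*} {a : σ → MvPowerSeries τ k}
    (ha : HasSubst a) (ha' : ∀ s, constantCoeff (a s) = 0) (f : MvPowerSeries σ k) :
    constantCoeff (subst a f) = constantCoeff f := by
  have hf : constantCoeff (f - C (constantCoeff f)) = 0 := by simp
  rw [← sub_add_cancel f (C (constantCoeff f)), subst_add ha, map_add,
    constantCoeff_subst_eq_zero ha ha' hf, subst_C]
  simp

variable [DecidableEq σ]

theorem constantCoeff_single_X (i j : σ) :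
    constantCoeff ((Pi.single i PowerSeries.X : σ → PowerSeries k) j) = 0 := by
  rw [Pi.single_apply]
  split_ifs
  · exact PowerSeries.constantCoeff_X
  · exact map_zero _

variable [Finite σ]

theorem hasSubst_single_X (i : σ) : HasSubst (Pi.single i (PowerSeries.X : PowerSeries k)) :=
  hasSubst_of_constantCoeff_zero (constantCoeff_single_X i)

def restrictToAxis (i : σ) : MvPowerSeries σ k →ₐ[k] PowerSeries k :=
  substAlgHom (hasSubst_single_X i)

theorem restrictToAxis_X (i j : σ) :
    restrictToAxis i (X j : MvPowerSeries σ k) =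
      (Pi.single i PowerSeries.X : σ → PowerSeries k) j :=
  substAlgHom_X _ j

theorem constantCoeff_restrictToAxis (i : σ) (f : MvPowerSeries σ k) :
    PowerSeries.constantCoeff (restrictToAxis i f) = constantCoeff f := by
  rw [restrictToAxis, coe_substAlgHom]
  exact constantCoeff_subst_of_constantCoeff_zero (hasSubst_single_X i)
    (constantCoeff_single_X i) f

end MvPowerSeries

open MvPowerSeries in
theorem 𝔞_le_ker {T : Type*} [Semiring T] {φ : S →+* T}
    (h : ∀ j k : Fin 3, j ≠ k → φ (X j) * φ (X k) = 0) : 𝔞 ≤ RingHom.ker φ := by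
  simp only [𝔞, span_le, Set.insert_subset_iff, Set.singleton_subset_iff, SetLike.mem_coe,
    RingHom.mem_ker, map_mul]
  exact ⟨h 0 1 (by decide), h 1 2 (by decide), h 2 0 (by decide)⟩

theorem x_mul_y : x * y = 0 := by
  rw [x, y, ← map_mul, Ideal.Quotient.eq_zero_iff_mem]; exact subset_span (by simp)

theorem y_mul_z : y * z = 0 := by
  rw [y, z, ← map_mul, Ideal.Quotient.eq_zero_iff_mem]; exact subset_span (by simp)

theorem z_mul_x : z * x = 0 := by
  rw [z, x, ← map_mul, Ideal.Quotient.eq_zero_iff_mem]; exact subset_span (by simp)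

def axisHom (i : Fin 3) : R →+* PowerSeries (ZMod 2) :=
  Ideal.Quotient.lift 𝔞 (MvPowerSeries.restrictToAxis i).toRingHom fun _ ha =>
    𝔞_le_ker (fun j k hjk => by
      simp only [AlgHom.toRingHom_eq_coe, RingHom.coe_coe, MvPowerSeries.restrictToAxis_X,
        Pi.single_apply]
      split_ifs <;> simp_all) ha

def constantTerm : R →+* ZMod 2 :=
  Ideal.Quotient.lift 𝔞 MvPowerSeries.constantCoeff fun _ ha =>
    𝔞_le_ker (fun _ _ _ => by simp) ha

theorem axisHom_mk (i : Fin 3) (f : S) :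
    axisHom i (Ideal.Quotient.mk 𝔞 f) = MvPowerSeries.restrictToAxis i f :=
  Ideal.Quotient.lift_mk _ _ _

theorem constantCoeff_axisHom (i : Fin 3) (r : R) :
    PowerSeries.constantCoeff (axisHom i r) = constantTerm r := by
  obtain ⟨f, rfl⟩ := Ideal.Quotient.mk_surjective r
  exact (congrArg _ (axisHom_mk i f)).trans (MvPowerSeries.constantCoeff_restrictToAxis i f)

theorem axisHom_x (i : Fin 3) : axisHom i x = (Pi.single i PowerSeries.X : Fin 3 → _) 0 := by
  rw [x, axisHom_mk, MvPowerSeries.restrictToAxis_X]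

theorem axisHom_y (i : Fin 3) : axisHom i y = (Pi.single i PowerSeries.X : Fin 3 → _) 1 := by
  rw [y, axisHom_mk, MvPowerSeries.restrictToAxis_X]

theorem axisHom_z (i : Fin 3) : axisHom i z = (Pi.single i PowerSeries.X : Fin 3 → _) 2 := by
  rw [z, axisHom_mk, MvPowerSeries.restrictToAxis_X]

theorem map_axisHom_span_pair (i : Fin 3) :
    (span {x + y, y + z}).map (axisHom i) = span {PowerSeries.X} := by
  rw [map_span, Set.image_pair]
  fin_cases i <;> simp [axisHom_x, axisHom_y, axisHom_z, Set.pair_comm]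

theorem not_exists_principal_reduction :
    ¬ ∃ a ∈ span {x + y, y + z}, ∃ n : ℕ,
      span {x + y, y + z} ^ (n + 1) = span {a} * span {x + y, y + z} ^ n := by
  rintro ⟨a, ha, n, hn⟩
  obtain ⟨α, β, rfl⟩ := mem_span_pair.mp ha
  have constantTerm_ne_zero (i : Fin 3) (g : R)
      (hg : axisHom i (α * (x + y) + β * (y + z)) = axisHom i g * PowerSeries.X) :
      constantTerm g ≠ 0 := by
    have hunit := isUnit_of_pow_succ_eq_span_mul (axisHom i) PowerSeries.X_ne_zero
      (map_axisHom_span_pair i) hn hg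
    rw [PowerSeries.isUnit_iff_constantCoeff, constantCoeff_axisHom] at hunit
    exact hunit.ne_zero
  have hα := constantTerm_ne_zero 0 α (by simp [axisHom_x, axisHom_y, axisHom_z])
  have hαβ := constantTerm_ne_zero 1 (α + β) (by simp [axisHom_x, axisHom_y, axisHom_z]; ring)
  have hβ := constantTerm_ne_zero 2 β (by simp [axisHom_x, axisHom_y, axisHom_z])
  have two_nonzero_add_eq_zero : ∀ p q : ZMod 2, p ≠ 0 → q ≠ 0 → p + q = 0 := by decide
  exact hαβ (map_add constantTerm α β ▸ two_nonzero_add_eq_zero _ _ hα hβ)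

/-- With `I = (x+y, y+z)` and `f = x+y+z`, the ideal `(f)` is an almost reduction of `I`
(indeed `f·I² = I³` and `f² ∈ I²`), but `I` admits no principal reduction, i.e. there is
no `a ∈ I` with `I^(n+1) = a·I^n` for some `n`. -/
theorem example_almost_reduction_without_reduction :
    letI I : Ideal R := Ideal.span {x + y, y + z}
    letI f : R := x + y + z
    IsAlmostReduction (Ideal.span {f}) I ∧
      Ideal.span {f} * I ^ 2 = I ^ 3 ∧ f ^ 2 ∈ I ^ 2 ∧
      ¬ ∃ a ∈ I, ∃ n : ℕ, I ^ (n + 1) = Ideal.span {a} * I ^ n := by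
  have hsq := span_pair_add_sq x_mul_y y_mul_z z_mul_x
  have hmul : span {x + y + z} * span {x + y, y + z} ^ 2 = span {x + y, y + z} ^ 3 := by
    rw [hsq, span_pair_add_pow_three x_mul_y y_mul_z z_mul_x,
      span_singleton_add_add_mul_span_sq x_mul_y y_mul_z z_mul_x]
  have hf : (x + y + z) ^ 2 ∈ span {x + y, y + z} ^ 2 :=
    hsq ▸ add_add_sq_mem_span_sq x_mul_y y_mul_z z_mul_x
  refine ⟨⟨2, ?_, hmul.symm⟩, hmul, hf, not_exists_principal_reduction⟩
  rw [span_singleton_pow, span_singleton_le_iff_mem]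
  exact hf
end
end
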